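/- In the setting of the previous theorem with m = 2 sub-intervals and F(-τ) < p_0/2, the helper data leaks nothing about Z: H(Z | U) = H(Z) = h(2F(-τ)), i.e., I(U; Z) = 0. -/
import Mathlib


/- Zero-leakage quantising helper data system, modelled in quantile space:
since F is continuous and strictly increasing and the density is even,
T = F(X) is uniform on [0,1) and the quantisation boundaries q_s become
cumulative probabilities c s = F(q_s), with c 0 = 0, c J = 1, and the
symmetry of the density becoming c (J-s) = 1 - c s.  V = sign(X) = 1 iff
F(X) > 1/2.  S is the quantisation index, U the m-fold sub-interval index. -/

open MeasureTheory Set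
open scoped Classical

/-- probability of an event under T uniform on [0,1) -/
noncomputable def pr (A : Set ℝ) : ℝ := (volume (A ∩ Set.Ico (0:ℝ) 1)).toReal

/-- binary entropy (base 2) -/
noncomputable def hb (p : ℝ) : ℝ := -(p * Real.logb 2 p) - (1 - p) * Real.logb 2 (1 - p)

/-- quantisation symbol: index of interval [c s, c (s+1)) containing t -/
noncomputable def qS (c : ℕ → ℝ) (J : ℕ) (t : ℝ) : ℕ :=
  Nat.findGreatest (fun s => c s ≤ t) (J - 1)

/-- helper data: sub-interval index u = ⌊m (F(x) - F(q_S))/p_S⌋ -/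
noncomputable def qU (c : ℕ → ℝ) (J m : ℕ) (t : ℝ) : ℕ :=
  (⌊(m : ℝ) * (t - c (qS c J t)) / (c (qS c J t + 1) - c (qS c J t))⌋).toNat

/-- V = sign(X); in quantile space X > 0 ↔ F(X) > 1/2 -/
noncomputable def Vq (t : ℝ) : ℤ := if 1/2 < t then 1 else -1
/-- privacy bit Z = 1{|X| > τ}; in quantile space, with a = F(-τ) and an even
density, |X| > τ ↔ F(X) < a ∨ F(X) > 1 - a. -/
noncomputable def Zq (a : ℝ) (t : ℝ) : ℕ := if t < a ∨ 1 - a < t then 1 else 0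

/- ------------------- auxiliary lemmas ------------------- -/

lemma aux_mono (J : ℕ) (c : ℕ → ℝ) (hmono : ∀ s < J, c s < c (s + 1)) :
    ∀ s t, s ≤ t → t ≤ J → c s ≤ c t := by
  intro s t hst htJ
  obtain ⟨k, rfl⟩ := Nat.exists_eq_add_of_le hst
  clear hst
  induction k with
  | zero => simp
  | succ n ih =>
    have h1 : c (s + n) ≤ c (s + n + 1) := le_of_lt (hmono _ (by omega))
    have h2 : c s ≤ c (s + n) := ih (by omega)
    calc c s ≤ c (s + n) := h2
      _ ≤ c (s + (n+1)) := by rw [← add_assoc]; exact h1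

lemma aux_qS_eq (J : ℕ) (hJ : 1 ≤ J) (c : ℕ → ℝ) (hmono : ∀ s < J, c s < c (s + 1))
    (s : ℕ) (hs : s < J) (t : ℝ) (h1 : c s ≤ t) (h2 : t < c (s + 1)) :
    qS c J t = s := by
  unfold qS
  rw [Nat.findGreatest_eq_iff]
  refine ⟨by omega, fun _ => h1, fun n hn hnb => ?_⟩
  simp only [not_le]
  have : c (s + 1) ≤ c n := aux_mono J c hmono (s+1) n (by omega) (by omega)
  linarith

lemma aux_qU (J : ℕ) (hJ : 1 ≤ J) (c : ℕ → ℝ) (hmono : ∀ s < J, c s < c (s + 1))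
    (s : ℕ) (hs : s < J) (t : ℝ) (h1 : c s ≤ t) (h2 : t < c (s + 1)) :
    (t < (c s + c (s + 1)) / 2 → qU c J 2 t = 0) ∧
    ((c s + c (s + 1)) / 2 ≤ t → qU c J 2 t = 1) := by
  have hq := aux_qS_eq J hJ c hmono s hs t h1 h2
  have hd : (0:ℝ) < c (s + 1) - c s := by linarith [hmono s hs]
  unfold qU
  rw [hq]
  constructor
  · intro hmid
    have hfl : ⌊(2:ℕ) * (t - c s) / (c (s + 1) - c s)⌋ = 0 := by
      rw [Int.floor_eq_zero_iff]
      constructor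
      · apply div_nonneg _ (le_of_lt hd)
        push_cast; linarith
      · rw [div_lt_one hd]; push_cast; linarith
    rw [hfl]; rfl
  · intro hmid
    have hfl : ⌊(2:ℕ) * (t - c s) / (c (s + 1) - c s)⌋ = 1 := by
      rw [Int.floor_eq_iff]
      constructor
      · rw [show ((1:ℤ):ℝ) = 1 by norm_num, le_div_iff₀ hd]; push_cast; linarith
      · rw [show ((1:ℤ):ℝ) + 1 = 2 by norm_num, div_lt_iff₀ hd]; push_cast; linarith
    rw [hfl]; rfl

lemma aux_exists_interval (J : ℕ) (hJ : 1 ≤ J) (c : ℕ → ℝ) (hc0 : c 0 = 0) (hcJ : c J = 1)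
    (t : ℝ) (ht0 : 0 ≤ t) (ht1 : t < 1) :
    ∃ s < J, c s ≤ t ∧ t < c (s + 1) := by
  set s := Nat.findGreatest (fun s => c s ≤ t) (J - 1) with hsdef
  have hP0 : c 0 ≤ t := by rw [hc0]; exact ht0
  have hspec : c s ≤ t := by
    simpa using Nat.findGreatest_spec (P := fun s => c s ≤ t) (m := 0) (Nat.zero_le _) hP0
  have hsle : s ≤ J - 1 := Nat.findGreatest_le _
  refine ⟨s, by omega, hspec, ?_⟩
  by_cases h : s + 1 ≤ J - 1
  · have hg := Nat.findGreatest_is_greatest (P := fun s => c s ≤ t) (lt_add_one s) h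
    simpa using not_le.mp hg
  · have : s + 1 = J := by omega
    rw [this, hcJ]; exact ht1

lemma aux_disj (a b c d : ℝ) (h : b ≤ c) : Disjoint (Set.Ico a b) (Set.Ico c d) := by
  rw [Set.disjoint_left]
  rintro x ⟨_, hx2⟩ ⟨hx3, _⟩
  linarith

theorem stmt_5 (J : ℕ) (hJ : 2 ≤ J)
    (c : ℕ → ℝ) (hc0 : c 0 = 0) (hcJ : c J = 1)
    (hmono : ∀ s < J, c s < c (s + 1))
    (hsym : ∀ s ≤ J, c (J - s) = 1 - c s)
    (a : ℝ) (ha0 : 0 ≤ a)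
    -- m = 2 and F(-τ) < p_0 / 2
    (ha : a < c 1 / 2) :
    -- Pr[Z = 1] = 2 F(-τ), so H(Z) = h(2 F(-τ))
    pr {t | Zq a t = 1} = 2 * a ∧
    -- H(Z | U) = h(2 F(-τ)) = H(Z)
    (∑ u ∈ Finset.range 2, pr {t | qU c J 2 t = u} *
      hb (pr {t | qU c J 2 t = u ∧ Zq a t = 1} / pr {t | qU c J 2 t = u}))
      = hb (2 * a) ∧
    -- I(U; Z) = H(Z) - H(Z|U) = 0
    hb (pr {t | Zq a t = 1}) -
      (∑ u ∈ Finset.range 2, pr {t | qU c J 2 t = u} *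
        hb (pr {t | qU c J 2 t = u ∧ Zq a t = 1} / pr {t | qU c J 2 t = u})) = 0 := by
  have hJ1 : 1 ≤ J := by omega
  have hc1pos : 0 < c 1 := by have := hmono 0 (by omega); rw [hc0] at this; exact this
  have hc1le1 : c 1 ≤ 1 := by
    have := aux_mono J c hmono 1 J hJ1 le_rfl; rw [hcJ] at this; exact this
  have ha12 : a < 1 / 2 := by linarith
  have hcJ1 : c (J - 1) = 1 - c 1 := hsym 1 hJ1
  have hJ1succ : J - 1 + 1 = J := by omega
  -- midpoint of last interval
  have hmidJ : (c (J - 1) + c (J - 1 + 1)) / 2 = 1 - c 1 / 2 := by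
    rw [hJ1succ, hcJ, hcJ1]; ring
  -- Z = 1 iff t < a or 1 - a < t
  have hZ : ∀ t : ℝ, Zq a t = 1 ↔ (t < a ∨ 1 - a < t) := by
    intro t; unfold Zq; split <;> simp_all
  -- membership facts about first / last intervals
  have hfirst : ∀ t : ℝ, 0 ≤ t → t < a → qU c J 2 t = 0 := by
    intro t ht0 hta
    have h1 : c 0 ≤ t := by rw [hc0]; exact ht0
    have h2 : t < c 1 := by linarith
    have := aux_qU J hJ1 c hmono 0 (by omega) t h1 h2
    exact this.1 (by rw [hc0]; linarith)
  have hlast : ∀ t : ℝ, 1 - a < t → t < 1 → qU c J 2 t = 1 := by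
    intro t hta ht1
    have h1 : c (J - 1) ≤ t := by rw [hcJ1]; linarith
    have h2 : t < c (J - 1 + 1) := by rw [hJ1succ, hcJ]; exact ht1
    have := aux_qU J hJ1 c hmono (J - 1) (by omega) t h1 h2
    exact this.2 (by rw [hmidJ]; linarith)
  -- set identity for Z = 1
  have hZset : {t : ℝ | Zq a t = 1} ∩ Set.Ico (0:ℝ) 1 =
      Set.Ico 0 a ∪ Set.Ioo (1 - a) 1 := by
    ext t
    simp only [Set.mem_inter_iff, Set.mem_setOf_eq, Set.mem_Ico, Set.mem_union,
      Set.mem_Ioo, hZ]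
    constructor
    · rintro ⟨h | h, ht0, ht1⟩
      · exact Or.inl ⟨ht0, h⟩
      · exact Or.inr ⟨h, ht1⟩
    · rintro (⟨ht0, h⟩ | ⟨h, ht1⟩)
      · exact ⟨Or.inl h, ht0, by linarith⟩
      · exact ⟨Or.inr h, by linarith, ht1⟩
  -- set identities for the joint events
  have hU0Z : {t : ℝ | qU c J 2 t = 0 ∧ Zq a t = 1} ∩ Set.Ico (0:ℝ) 1 = Set.Ico 0 a := by
    ext t
    simp only [Set.mem_inter_iff, Set.mem_setOf_eq, Set.mem_Ico, hZ]
    constructor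
    · rintro ⟨⟨hq, h | h⟩, ht0, ht1⟩
      · exact ⟨ht0, h⟩
      · exact absurd (hlast t h ht1) (by rw [hq]; norm_num)
    · rintro ⟨ht0, hta⟩
      exact ⟨⟨hfirst t ht0 hta, Or.inl hta⟩, ht0, by linarith⟩
  have hU1Z : {t : ℝ | qU c J 2 t = 1 ∧ Zq a t = 1} ∩ Set.Ico (0:ℝ) 1 =
      Set.Ioo (1 - a) 1 := by
    ext t
    simp only [Set.mem_inter_iff, Set.mem_setOf_eq, Set.mem_Ico, Set.mem_Ioo, hZ]
    constructor
    · rintro ⟨⟨hq, h | h⟩, ht0, ht1⟩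
      · exact absurd (hfirst t ht0 h) (by rw [hq]; norm_num)
      · exact ⟨h, ht1⟩
    · rintro ⟨hta, ht1⟩
      exact ⟨⟨hlast t hta ht1, Or.inr hta⟩, by linarith, ht1⟩
  -- set identities for the helper-data events
  have hU0set : {t : ℝ | qU c J 2 t = 0} ∩ Set.Ico (0:ℝ) 1 =
      ⋃ s ∈ Finset.range J, Set.Ico (c s) ((c s + c (s + 1)) / 2) := by
    ext t
    simp only [Set.mem_inter_iff, Set.mem_setOf_eq, Set.mem_Ico, Set.mem_iUnion,
      Finset.mem_range, exists_prop]
    constructor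
    · rintro ⟨hq, ht0, ht1⟩
      obtain ⟨s, hs, h1, h2⟩ := aux_exists_interval J hJ1 c hc0 hcJ t ht0 ht1
      refine ⟨s, hs, h1, ?_⟩
      by_contra hmid
      push_neg at hmid
      have := (aux_qU J hJ1 c hmono s hs t h1 h2).2 hmid
      rw [this] at hq; exact one_ne_zero hq
    · rintro ⟨s, hs, h1, h2⟩
      have hss := hmono s hs
      have h2' : t < c (s + 1) := by linarith
      refine ⟨(aux_qU J hJ1 c hmono s hs t h1 h2').1 h2, ?_, ?_⟩
      · have : (0:ℝ) ≤ c s := by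
          have := aux_mono J c hmono 0 s (Nat.zero_le _) (le_of_lt hs)
          rw [hc0] at this; exact this
        linarith
      · have : c (s + 1) ≤ 1 := by
          have := aux_mono J c hmono (s + 1) J (by omega) le_rfl
          rw [hcJ] at this; exact this
        linarith
  have hU1set : {t : ℝ | qU c J 2 t = 1} ∩ Set.Ico (0:ℝ) 1 =
      ⋃ s ∈ Finset.range J, Set.Ico ((c s + c (s + 1)) / 2) (c (s + 1)) := by
    ext t
    simp only [Set.mem_inter_iff, Set.mem_setOf_eq, Set.mem_Ico, Set.mem_iUnion,
      Finset.mem_range, exists_prop]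
    constructor
    · rintro ⟨hq, ht0, ht1⟩
      obtain ⟨s, hs, h1, h2⟩ := aux_exists_interval J hJ1 c hc0 hcJ t ht0 ht1
      refine ⟨s, hs, ?_, h2⟩
      by_contra hmid
      push_neg at hmid
      have := (aux_qU J hJ1 c hmono s hs t h1 h2).1 hmid
      rw [this] at hq; exact zero_ne_one hq
    · rintro ⟨s, hs, h1, h2⟩
      have hss := hmono s hs
      have h1' : c s ≤ t := by linarith
      refine ⟨(aux_qU J hJ1 c hmono s hs t h1' h2).2 h1, ?_, ?_⟩
      · have : (0:ℝ) ≤ c s := by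
          have := aux_mono J c hmono 0 s (Nat.zero_le _) (le_of_lt hs)
          rw [hc0] at this; exact this
        linarith
      · have : c (s + 1) ≤ 1 := by
          have := aux_mono J c hmono (s + 1) J (by omega) le_rfl
          rw [hcJ] at this; exact this
        linarith
  -- measure computations
  have hmeas0 : pr {t : ℝ | qU c J 2 t = 0} = 1 / 2 := by
    unfold pr
    rw [hU0set, measure_biUnion_finset ?_ (fun s _ => measurableSet_Ico)]
    · rw [ENNReal.toReal_sum (fun s _ => by rw [Real.volume_Ico]; exact ENNReal.ofReal_ne_top)]
      have : ∀ s ∈ Finset.range J,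
          (volume (Set.Ico (c s) ((c s + c (s + 1)) / 2))).toReal
            = (c (s + 1) - c s) / 2 := by
        intro s hs
        rw [Real.volume_Ico, ENNReal.toReal_ofReal (by have := hmono s (Finset.mem_range.mp hs); linarith)]
        ring
      rw [Finset.sum_congr rfl this, ← Finset.sum_div, Finset.sum_range_sub, hcJ, hc0]
      norm_num
    · intro s hs s' hs' hne
      simp only [Finset.mem_coe, Finset.mem_range] at hs hs'
      rcases lt_or_gt_of_ne hne with h | h
      · refine aux_disj _ _ _ _ ?_
        have h1 : (c s + c (s + 1)) / 2 ≤ c (s + 1) := by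
          have := hmono s hs; linarith
        have h2 : c (s + 1) ≤ c s' := aux_mono J c hmono (s + 1) s' (by omega) (le_of_lt hs')
        linarith
      · refine (aux_disj _ _ _ _ ?_).symm
        have h1 : (c s' + c (s' + 1)) / 2 ≤ c (s' + 1) := by
          have := hmono s' hs'; linarith
        have h2 : c (s' + 1) ≤ c s := aux_mono J c hmono (s' + 1) s (by omega) (le_of_lt hs)
        linarith
  have hmeas1 : pr {t : ℝ | qU c J 2 t = 1} = 1 / 2 := by
    unfold pr
    rw [hU1set, measure_biUnion_finset ?_ (fun s _ => measurableSet_Ico)]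
    · rw [ENNReal.toReal_sum (fun s _ => by rw [Real.volume_Ico]; exact ENNReal.ofReal_ne_top)]
      have : ∀ s ∈ Finset.range J,
          (volume (Set.Ico ((c s + c (s + 1)) / 2) (c (s + 1)))).toReal
            = (c (s + 1) - c s) / 2 := by
        intro s hs
        rw [Real.volume_Ico, ENNReal.toReal_ofReal (by have := hmono s (Finset.mem_range.mp hs); linarith)]
        ring
      rw [Finset.sum_congr rfl this, ← Finset.sum_div, Finset.sum_range_sub, hcJ, hc0]
      norm_num
    · intro s hs s' hs' hne
      simp only [Finset.mem_coe, Finset.mem_range] at hs hs'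
      rcases lt_or_gt_of_ne hne with h | h
      · refine aux_disj _ _ _ _ ?_
        have h2 : c (s + 1) ≤ c s' := aux_mono J c hmono (s + 1) s' (by omega) (le_of_lt hs')
        have h3 : c s' ≤ (c s' + c (s' + 1)) / 2 := by
          have := hmono s' hs'; linarith
        linarith
      · refine (aux_disj _ _ _ _ ?_).symm
        have h2 : c (s' + 1) ≤ c s := aux_mono J c hmono (s' + 1) s (by omega) (le_of_lt hs)
        have h3 : c s ≤ (c s + c (s + 1)) / 2 := by
          have := hmono s hs; linarith
        linarith
  have hmeasU0Z : pr {t : ℝ | qU c J 2 t = 0 ∧ Zq a t = 1} = a := by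
    unfold pr
    rw [hU0Z, Real.volume_Ico, ENNReal.toReal_ofReal (by linarith)]
    ring
  have hmeasU1Z : pr {t : ℝ | qU c J 2 t = 1 ∧ Zq a t = 1} = a := by
    unfold pr
    rw [hU1Z, Real.volume_Ioo, ENNReal.toReal_ofReal (by linarith)]
    ring
  have hmeasZ : pr {t : ℝ | Zq a t = 1} = 2 * a := by
    unfold pr
    rw [hZset, measure_union (aux_disj 0 a (1 - a) 1 (by linarith) |>.mono_right Set.Ioo_subset_Ico_self) measurableSet_Ioo]
    rw [ENNReal.toReal_add (by rw [Real.volume_Ico]; exact ENNReal.ofReal_ne_top) (by rw [Real.volume_Ioo]; exact ENNReal.ofReal_ne_top), Real.volume_Ico,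
      Real.volume_Ioo, ENNReal.toReal_ofReal (by linarith), ENNReal.toReal_ofReal (by linarith)]
    ring
  have hsum : (∑ u ∈ Finset.range 2, pr {t | qU c J 2 t = u} *
      hb (pr {t | qU c J 2 t = u ∧ Zq a t = 1} / pr {t | qU c J 2 t = u}))
      = hb (2 * a) := by
    rw [Finset.sum_range_succ, Finset.sum_range_one, hmeas0, hmeas1, hmeasU0Z, hmeasU1Z]
    have h2a : a / (1 / 2) = 2 * a := by ring
    rw [h2a]
    ring
  exact ⟨hmeasZ, hsum, by rw [hmeasZ, hsum]; ring⟩
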